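/- arXiv:2310.20002 — 5 statements merged into one kernel-verified Lean document; each statement's English description precedes it below -/
import Mathlib

section
/- For all y0, y in R^N, E(y + y0) - E(y0) - E'(y0)[y] >= 2^{-4} * (1+|y0|^2)^{-3/2} * E(y), where E(z) = sqrt(1+|z|^2) - 1 and E'(y0)[y] = (d/dt)|_{t=0} E(y0 + t y). -/
open scoped RealInnerProductSpace

noncomputable def areaE {N : ℕ} (z : EuclideanSpace ℝ (Fin N)) : ℝ :=
  Real.sqrt (1 + ‖z‖ ^ 2) - 1

set_option maxHeartbeats 1600000 in
theorem stmt_4 {N : ℕ} (y0 y : EuclideanSpace ℝ (Fin N)) :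
    areaE (y + y0) - areaE y0 - ⟪y0, y⟫ / Real.sqrt (1 + ‖y0‖ ^ 2) ≥
      (2 : ℝ) ^ (-4 : ℤ) * (1 + ‖y0‖ ^ 2) ^ (-(3 : ℝ) / 2) * areaE y := by
  set a := ‖y0‖ with ha
  set b := ‖y‖ with hb
  set s := ⟪y0, y⟫ with hs
  have ha0 : 0 ≤ a := norm_nonneg _
  have hb0 : 0 ≤ b := norm_nonneg _
  have habs : |s| ≤ a * b := abs_real_inner_le_norm y0 y
  have hsle : s ≤ a * b := le_of_abs_le habs
  have hsge : -(a * b) ≤ s := neg_le_of_abs_le habs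
  have hs2 : s ^ 2 ≤ (a * b) ^ 2 := by
    rw [← sq_abs]; exact pow_le_pow_left₀ (abs_nonneg s) habs 2
  have hnorm : ‖y + y0‖ ^ 2 = b ^ 2 + 2 * s + a ^ 2 := by
    rw [norm_add_sq_real, real_inner_comm]
  simp only [areaE]
  rw [hnorm]
  set A := Real.sqrt (1 + a ^ 2) with hA
  set B := Real.sqrt (1 + b ^ 2) with hB
  set C := Real.sqrt (1 + (b ^ 2 + 2 * s + a ^ 2)) with hC
  have hC2nn : (0:ℝ) ≤ 1 + (b ^ 2 + 2 * s + a ^ 2) := by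
    linarith [sq_nonneg (a - b), hsge]
  have hA2 : A ^ 2 = 1 + a ^ 2 := Real.sq_sqrt (by positivity)
  have hB2 : B ^ 2 = 1 + b ^ 2 := Real.sq_sqrt (by positivity)
  have hC2 : C ^ 2 = 1 + (b ^ 2 + 2 * s + a ^ 2) := Real.sq_sqrt hC2nn
  have hA0 : 0 ≤ A := Real.sqrt_nonneg _
  have hB0 : 0 ≤ B := Real.sqrt_nonneg _
  have hC0 : 0 ≤ C := Real.sqrt_nonneg _
  have hA1 : 1 ≤ A := by
    have h := Real.sqrt_le_sqrt (show (1:ℝ) ≤ 1 + a ^ 2 by linarith [sq_nonneg a])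
    rwa [Real.sqrt_one] at h
  have hB1 : 1 ≤ B := by
    have h := Real.sqrt_le_sqrt (show (1:ℝ) ≤ 1 + b ^ 2 by linarith [sq_nonneg b])
    rwa [Real.sqrt_one] at h
  have hC1 : 1 ≤ C := by
    have h := Real.sqrt_le_sqrt (show (1:ℝ) ≤ 1 + (b ^ 2 + 2 * s + a ^ 2) by
      linarith [sq_nonneg (a - b), hsge])
    rwa [Real.sqrt_one] at h
  have hApos : (0:ℝ) < A := lt_of_lt_of_le one_pos hA1
  have hCpos : (0:ℝ) < C := lt_of_lt_of_le one_pos hC1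
  have haA : a ≤ A := by
    have h := Real.sqrt_le_sqrt (show a ^ 2 ≤ 1 + a ^ 2 by linarith)
    rwa [Real.sqrt_sq ha0] at h
  have hCAb : C ≤ A + b := by
    have hab : a * b ≤ A * b := mul_le_mul_of_nonneg_right haA hb0
    have hle : 1 + (b ^ 2 + 2 * s + a ^ 2) ≤ (A + b) ^ 2 := by
      have hexp : (A + b) ^ 2 = (1 + a ^ 2) + 2 * (A * b) + b ^ 2 := by
        rw [← hA2]; ring
      linarith [hsle, hab]
    have h := Real.sqrt_le_sqrt hle
    rwa [Real.sqrt_sq (by positivity)] at h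
  have hBb : B - 1 ≤ b := by
    have hle : 1 + b ^ 2 ≤ (1 + b) ^ 2 := by nlinarith [hb0]
    have h := Real.sqrt_le_sqrt hle
    rw [Real.sqrt_sq (by positivity)] at h
    linarith
  have hB1' : (0:ℝ) ≤ B - 1 := by linarith
  have hB12 : 2 * (B - 1) ≤ b ^ 2 := by
    have h := sq_nonneg (B - 1)
    have hexp : (B - 1) ^ 2 = B ^ 2 - 2 * B + 1 := by ring
    rw [hexp, hB2] at h
    linarith
  set T := 1 + a ^ 2 + s with hT
  have hkey : b ^ 2 ≤ A ^ 2 * C ^ 2 - T ^ 2 := by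
    have hprod : A ^ 2 * C ^ 2 = (1 + a ^ 2) * (1 + (b ^ 2 + 2 * s + a ^ 2)) := by
      rw [hA2, hC2]
    have hid : (1 + a ^ 2) * (1 + (b ^ 2 + 2 * s + a ^ 2)) - T ^ 2
        = (1 + a ^ 2) * b ^ 2 - s ^ 2 := by rw [hT]; ring
    have hab2 : 0 ≤ a ^ 2 * b ^ 2 := by positivity
    have hs2' : s ^ 2 ≤ a ^ 2 * b ^ 2 := by
      have : (a * b) ^ 2 = a ^ 2 * b ^ 2 := by ring
      linarith [hs2, this.symm.le, this.le]
    rw [hprod, hid]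
    have : (1 + a ^ 2) * b ^ 2 = b ^ 2 + a ^ 2 * b ^ 2 := by ring
    linarith [this.le, this.symm.le]
  have hmain : b ^ 2 ≤ (A * C - T) * (2 * (A * C)) := by
    have hsq := sq_nonneg (A * C - T)
    have hid : (A * C - T) * (2 * (A * C))
        = (A * C - T) ^ 2 + (A ^ 2 * C ^ 2 - T ^ 2) := by ring
    linarith [hkey, hsq, hid.le, hid.symm.le]
  -- bound C * (B - 1)
  have h5 : (1 + b) * (B - 1) ≤ 2 * b ^ 2 := by
    have hp : b * (B - 1) ≤ b * b := mul_le_mul_of_nonneg_left hBb hb0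
    have hbb : b * b = b ^ 2 := by ring
    nlinarith [hB12, hp]
  have h6 : C * (B - 1) ≤ (A + b) * (B - 1) := mul_le_mul_of_nonneg_right hCAb hB1'
  have h7 : A + b ≤ A * (1 + b) := by
    have : b * 1 ≤ b * A := mul_le_mul_of_nonneg_left hA1 hb0
    nlinarith [this]
  have h8 : (B - 1) * A * C ≤ 8 * A ^ 2 * b ^ 2 := by
    calc (B - 1) * A * C = A * (C * (B - 1)) := by ring
      _ ≤ A * ((A + b) * (B - 1)) := mul_le_mul_of_nonneg_left h6 hApos.le
      _ ≤ A * (A * (1 + b) * (B - 1)) := by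
          exact mul_le_mul_of_nonneg_left (mul_le_mul_of_nonneg_right h7 hB1') hApos.le
      _ = A * A * ((1 + b) * (B - 1)) := by ring
      _ ≤ A * A * (2 * b ^ 2) := mul_le_mul_of_nonneg_left h5 (by positivity)
      _ ≤ 8 * A ^ 2 * b ^ 2 := by nlinarith [sq_nonneg (A * b)]
  have h10 : (B - 1) * A * C ≤ (16 * A ^ 3 * (A * C - T)) * C := by
    have hp := mul_le_mul_of_nonneg_left hmain (show (0:ℝ) ≤ 8 * A ^ 2 by positivity)
    have hid : 8 * A ^ 2 * ((A * C - T) * (2 * (A * C)))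
        = (16 * A ^ 3 * (A * C - T)) * C := by ring
    linarith [h8, hp, hid.le, hid.symm.le]
  have h11 : (B - 1) * A ≤ 16 * A ^ 3 * (A * C - T) :=
    le_of_mul_le_mul_right h10 hCpos
  -- rewrite the rpow factor
  have h1 : ((1:ℝ) + a ^ 2) ^ ((3:ℝ) / 2) = A ^ 3 := by
    rw [hA, Real.sqrt_eq_rpow, ← Real.rpow_natCast ((1 + a ^ 2) ^ ((1:ℝ) / 2)) 3,
      ← Real.rpow_mul (by positivity)]
    norm_num
  have hrpow : ((1:ℝ) + a ^ 2) ^ (-(3:ℝ) / 2) = (A ^ 3)⁻¹ := by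
    rw [show (-(3:ℝ) / 2) = -((3:ℝ) / 2) by ring, Real.rpow_neg (by positivity), h1]
  rw [hrpow]
  have hz : ((2:ℝ) ^ (-4 : ℤ)) = 1 / 16 := by norm_num
  rw [hz]
  -- final arithmetic
  have heq : C - 1 - (A - 1) - s / A = (A * C - T) / A := by
    field_simp
    linear_combination -hA2
  rw [ge_iff_le, heq]
  have hrhs : 1 / 16 * (A ^ 3)⁻¹ * (B - 1) = ((B - 1) * A) / (16 * A ^ 3 * A) := by
    field_simp
  rw [hrhs]
  rw [div_le_div_iff₀ (by positivity) (by positivity)]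
  have hp := mul_le_mul_of_nonneg_right h11 hA0
  linarith [hp]
end

section
/- Let mu be a finite R^N-valued Borel measure on a bounded open set omega in R^n with 0 < Lebesgue measure of omega < infinity, and let (mu)_omega = mu(omega)/L^n(omega). Then inf over y in R^N of the integral over omega of E(mu - y*L^n) is at most the integral over omega of E(mu - (mu)_omega * L^n), which in turn is at most 4 times that infimum. Here for a measure nu with Lebesgue decomposition nu = g L^n + nu^s, the integral of E(nu) means the integral of E(g) dL^n plus the total variation |nu^s|(omega). -/
open MeasureTheory

/-- The "integral of `E(μ - y·Lⁿ)`" for a vector measure `μ = g·Lⁿ + f·ν` with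
`ν ⟂ Lⁿ` and `‖f‖ = 1` ν-a.e.: it equals `∫_ω E(g - y) dx + ν(ω)`. -/
noncomputable def areaEInt {n N : ℕ} (ω : Set (EuclideanSpace ℝ (Fin n)))
    (g : EuclideanSpace ℝ (Fin n) → EuclideanSpace ℝ (Fin N))
    (ν : Measure (EuclideanSpace ℝ (Fin n)))
    (y : EuclideanSpace ℝ (Fin N)) : ℝ :=
  (∫ x in ω, areaE (g x - y)) + (ν ω).toReal

/-!
`E` is convex and `1`-Lipschitz, and `E(2z) ≤ 4 E(z)`, so that `E(u + v) ≤ 2 E(u) + 2 E(v)`.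
The mean `ȳ = (μ)_ω` is `⨍_ω g + c` where `|ω| ‖c‖ ≤ |ν|(ω)` comes from the singular part.
Jensen gives `|ω| E(⨍_ω g - y) ≤ ∫_ω E(g - y)`, hence by the quasi-triangle inequality
`∫_ω E(g - ȳ) ≤ 2 ∫_ω E(g - y) + 2 |ω| E(ȳ - y) ≤ 4 ∫_ω E(g - y) + 2 |ν|(ω)` for every `y`.
-/

section

variable {N : ℕ}

lemma areaE_eq_norm_sub_one (z : EuclideanSpace ℝ (Fin N)) :
    areaE z = ‖WithLp.toLp 2 ((1 : ℝ), z)‖ - 1 := by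
  simp [areaE, WithLp.prod_norm_eq_of_L2]

lemma areaE_nonneg (z : EuclideanSpace ℝ (Fin N)) : 0 ≤ areaE z := by
  rw [areaE, sub_nonneg, Real.one_le_sqrt]
  exact le_add_of_nonneg_right (sq_nonneg _)

@[simp]
lemma areaE_neg (z : EuclideanSpace ℝ (Fin N)) : areaE (-z) = areaE z := by
  simp [areaE]

lemma areaE_add_le_add_norm (u v : EuclideanSpace ℝ (Fin N)) :
    areaE (u + v) ≤ areaE u + ‖v‖ := by
  have h : WithLp.toLp 2 ((1 : ℝ), u + v) =
      WithLp.toLp 2 ((1 : ℝ), u) + WithLp.toLp 2 ((0 : ℝ), v) := by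
    simp [← WithLp.toLp_add]
  have hv : ‖WithLp.toLp 2 ((0 : ℝ), v)‖ = ‖v‖ := by simp
  simp only [areaE_eq_norm_sub_one, h]
  linarith [norm_add_le (WithLp.toLp 2 ((1 : ℝ), u)) (WithLp.toLp 2 ((0 : ℝ), v))]

lemma lipschitzWith_areaE : LipschitzWith 1 (areaE (N := N)) :=
  LipschitzWith.of_le_add fun u v => by
    simpa [dist_eq_norm] using areaE_add_le_add_norm v (u - v)

lemma areaE_le_norm (z : EuclideanSpace ℝ (Fin N)) : areaE z ≤ ‖z‖ := by
  simpa [areaE] using areaE_add_le_add_norm 0 z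

lemma convexOn_areaE : ConvexOn ℝ Set.univ (areaE (N := N)) := by
  refine ⟨convex_univ, fun x _ y _ a b ha hb hab => ?_⟩
  have h : WithLp.toLp 2 ((1 : ℝ), a • x + b • y) =
      a • WithLp.toLp 2 ((1 : ℝ), x) + b • WithLp.toLp 2 ((1 : ℝ), y) := by
    simp [← WithLp.toLp_smul, ← WithLp.toLp_add, hab]
  have := norm_add_le (a • WithLp.toLp 2 ((1 : ℝ), x)) (b • WithLp.toLp 2 ((1 : ℝ), y))
  simp only [norm_smul, Real.norm_of_nonneg ha, Real.norm_of_nonneg hb] at this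
  simp only [areaE_eq_norm_sub_one, h, smul_eq_mul]
  linear_combination this + hab

/-- With `A = √(1 + ‖z‖²) ≥ 1`: `1 + ‖2z‖² = 4A² - 3 ≤ (4A - 3)²`, the difference being
`12 (A - 1)²`. -/
lemma areaE_two_smul_le (z : EuclideanSpace ℝ (Fin N)) :
    areaE ((2 : ℝ) • z) ≤ 4 * areaE z := by
  have hA : 1 ≤ Real.sqrt (1 + ‖z‖ ^ 2) :=
    Real.one_le_sqrt.2 (le_add_of_nonneg_right (sq_nonneg _))
  have hA2 := Real.sq_sqrt (show 0 ≤ 1 + ‖z‖ ^ 2 by positivity)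
  rw [areaE, areaE, norm_smul, Real.norm_two]
  rw [sub_le_iff_le_add, Real.sqrt_le_iff]
  constructor
  · linarith
  · nlinarith

lemma areaE_add_le (u v : EuclideanSpace ℝ (Fin N)) :
    areaE (u + v) ≤ 2 * areaE u + 2 * areaE v := by
  have h := convexOn_areaE.2 (Set.mem_univ ((2 : ℝ) • u)) (Set.mem_univ ((2 : ℝ) • v))
    (by norm_num : (0 : ℝ) ≤ 1 / 2) (by norm_num : (0 : ℝ) ≤ 1 / 2) (by norm_num)
  simp only [smul_smul, smul_eq_mul] at h
  norm_num at h
  linarith [areaE_two_smul_le u, areaE_two_smul_le v]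

section Integral

variable {α : Type*} [MeasurableSpace α] {μ : Measure α} [IsFiniteMeasure μ]
  {G : α → EuclideanSpace ℝ (Fin N)}

lemma MeasureTheory.Integrable.areaE_sub (hG : Integrable G μ) (y : EuclideanSpace ℝ (Fin N)) :
    Integrable (fun x => areaE (G x - y)) μ := by
  have hGy := hG.sub (integrable_const y)
  refine hGy.norm.mono
    (lipschitzWith_areaE.continuous.comp_aestronglyMeasurable hGy.aestronglyMeasurable) ?_
  refine .of_forall fun x => ?_
  simpa [Real.norm_of_nonneg (areaE_nonneg _)] using areaE_le_norm (G x - y)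

lemma integral_areaE_sub_le (hG : Integrable G μ) (y z : EuclideanSpace ℝ (Fin N)) :
    ∫ x, areaE (G x - z) ∂μ ≤
      2 * ∫ x, areaE (G x - y) ∂μ + 2 * μ.real Set.univ * areaE (z - y) := by
  have hpt : ∀ x, areaE (G x - z) ≤ 2 * areaE (G x - y) + 2 * areaE (z - y) := fun x => by
    rw [show G x - z = (G x - y) + -(z - y) by abel, ← areaE_neg (z - y)]
    exact areaE_add_le _ _
  calc ∫ x, areaE (G x - z) ∂μ ≤ ∫ x, (2 * areaE (G x - y) + 2 * areaE (z - y)) ∂μ :=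
        integral_mono (hG.areaE_sub z) (((hG.areaE_sub y).const_mul 2).add (integrable_const _)) hpt
    _ = _ := by
        rw [integral_add ((hG.areaE_sub y).const_mul 2) (integrable_const _), integral_const_mul,
          integral_const, smul_eq_mul]
        ring

lemma measureReal_mul_areaE_average_sub_le (hG : Integrable G μ) (y : EuclideanSpace ℝ (Fin N)) :
    μ.real Set.univ * areaE (⨍ x, G x ∂μ - y) ≤ ∫ x, areaE (G x - y) ∂μ := by
  rcases eq_zero_or_neZero μ with rfl | _
  · simp
  have hJensen : areaE (⨍ x, (G x - y) ∂μ) ≤ ⨍ x, areaE (G x - y) ∂μ :=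
    convexOn_areaE.map_average_le lipschitzWith_areaE.continuous.continuousOn isClosed_univ
      (.of_forall fun _ => trivial) (hG.sub (integrable_const y)) (hG.areaE_sub y)
  have hmean : ⨍ x, (G x - y) ∂μ = ⨍ x, G x ∂μ - y := by
    rw [average_eq, average_eq, integral_sub hG (integrable_const y), integral_const, smul_sub,
      inv_smul_smul₀ measureReal_univ_ne_zero]
  calc μ.real Set.univ * areaE (⨍ x, G x ∂μ - y)
      ≤ μ.real Set.univ * ⨍ x, areaE (G x - y) ∂μ := by
        rw [← hmean]; exact mul_le_mul_of_nonneg_left hJensen measureReal_nonneg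
    _ = ∫ x, areaE (G x - y) ∂μ := measure_smul_average μ _

lemma integral_areaE_sub_average_add_le (hG : Integrable G μ) (c y : EuclideanSpace ℝ (Fin N)) :
    ∫ x, areaE (G x - (⨍ x, G x ∂μ + c)) ∂μ ≤
      4 * ∫ x, areaE (G x - y) ∂μ + 2 * μ.real Set.univ * ‖c‖ := by
  have hJensen := measureReal_mul_areaE_average_sub_le hG y
  calc ∫ x, areaE (G x - (⨍ x, G x ∂μ + c)) ∂μ
      ≤ 2 * ∫ x, areaE (G x - y) ∂μ + 2 * μ.real Set.univ * areaE (⨍ x, G x ∂μ + c - y) :=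
        integral_areaE_sub_le hG y _
    _ ≤ 2 * ∫ x, areaE (G x - y) ∂μ + 2 * μ.real Set.univ * (areaE (⨍ x, G x ∂μ - y) + ‖c‖) := by
        rw [add_sub_right_comm]
        gcongr
        exact areaE_add_le_add_norm _ _
    _ ≤ _ := by linear_combination 2 * hJensen

end Integral

lemma areaEInt_le_four_mul {n : ℕ} {ω : Set (EuclideanSpace ℝ (Fin n))}
    (hpos : 0 < (volume ω).toReal) {g : EuclideanSpace ℝ (Fin n) → EuclideanSpace ℝ (Fin N)}
    (hg : IntegrableOn g ω) {ν : Measure (EuclideanSpace ℝ (Fin n))}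
    {f : EuclideanSpace ℝ (Fin n) → EuclideanSpace ℝ (Fin N)} (hf : ∀ᵐ x ∂ν, ‖f x‖ = 1)
    (y : EuclideanSpace ℝ (Fin N)) :
    areaEInt ω g ν (((volume ω).toReal)⁻¹ • ((∫ x in ω, g x) + ∫ x in ω, f x ∂ν)) ≤
      4 * areaEInt ω g ν y := by
  have : IsFiniteMeasure (volume.restrict ω) :=
    isFiniteMeasure_restrict.2 (ENNReal.toReal_pos_iff.1 hpos).2.ne
  set V := (volume ω).toReal
  have hV : (volume.restrict ω).real Set.univ = V := by
    rw [measureReal_restrict_apply_univ, measureReal_def]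
  have hmean : V⁻¹ • ((∫ x in ω, g x) + ∫ x in ω, f x ∂ν) =
      (⨍ x in ω, g x) + V⁻¹ • ∫ x in ω, f x ∂ν := by
    rw [setAverage_eq, smul_add]
    rfl
  have hsingular : V * ‖V⁻¹ • ∫ x in ω, f x ∂ν‖ ≤ ν.real ω := by
    calc V * ‖V⁻¹ • ∫ x in ω, f x ∂ν‖ = ‖∫ x in ω, f x ∂ν‖ := by
          rw [norm_smul, Real.norm_of_nonneg (inv_nonneg.2 hpos.le), mul_inv_cancel_left₀ hpos.ne']
      _ ≤ ∫ x in ω, ‖f x‖ ∂ν := norm_integral_le_integral_norm f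
      _ = ∫ x in ω, (1 : ℝ) ∂ν := integral_congr_ae (ae_restrict_of_ae hf)
      _ = ν.real ω := by simp
  have key := integral_areaE_sub_average_add_le hg (V⁻¹ • ∫ x in ω, f x ∂ν) y
  rw [hV] at key
  simp only [areaEInt, hmean, ← measureReal_def]
  linear_combination key + 2 * hsingular + (measureReal_nonneg : 0 ≤ ν.real ω)

end

theorem stmt_5_general {n N : ℕ} (ω : Set (EuclideanSpace ℝ (Fin n)))
    (hpos : 0 < (volume ω).toReal)
    (g : EuclideanSpace ℝ (Fin n) → EuclideanSpace ℝ (Fin N))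
    (hg : IntegrableOn g ω)
    (ν : Measure (EuclideanSpace ℝ (Fin n)))
    (f : EuclideanSpace ℝ (Fin n) → EuclideanSpace ℝ (Fin N))
    (hf : ∀ᵐ x ∂ν, ‖f x‖ = 1) :
    (⨅ y : EuclideanSpace ℝ (Fin N), areaEInt ω g ν y) ≤
        areaEInt ω g ν (((volume ω).toReal)⁻¹ • ((∫ x in ω, g x) + ∫ x in ω, f x ∂ν)) ∧
      areaEInt ω g ν (((volume ω).toReal)⁻¹ • ((∫ x in ω, g x) + ∫ x in ω, f x ∂ν)) ≤
        4 * ⨅ y : EuclideanSpace ℝ (Fin N), areaEInt ω g ν y := by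
  have hbdd : BddBelow (Set.range (areaEInt ω g ν)) := by
    refine ⟨0, ?_⟩
    rintro _ ⟨y, rfl⟩
    exact add_nonneg (integral_nonneg fun x => areaE_nonneg _) ENNReal.toReal_nonneg
  refine ⟨ciInf_le hbdd _, ?_⟩
  rw [Real.mul_iInf_of_nonneg (by norm_num)]
  exact le_ciInf fun y => areaEInt_le_four_mul hpos hg hf y

theorem stmt_5 {n N : ℕ} (ω : Set (EuclideanSpace ℝ (Fin n)))
    (hω : IsOpen ω) (hbd : Bornology.IsBounded ω)
    (hpos : 0 < (volume ω).toReal)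
    (g : EuclideanSpace ℝ (Fin n) → EuclideanSpace ℝ (Fin N))
    (hg : IntegrableOn g ω)
    (ν : Measure (EuclideanSpace ℝ (Fin n))) [IsFiniteMeasure ν]
    (hsing : ν.MutuallySingular volume)
    (f : EuclideanSpace ℝ (Fin n) → EuclideanSpace ℝ (Fin N))
    (hf : ∀ᵐ x ∂ν, ‖f x‖ = 1) (hfint : Integrable f ν) :
    (⨅ y : EuclideanSpace ℝ (Fin N), areaEInt ω g ν y) ≤
        areaEInt ω g ν (((volume ω).toReal)⁻¹ • ((∫ x in ω, g x) + ∫ x in ω, f x ∂ν)) ∧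
      areaEInt ω g ν (((volume ω).toReal)⁻¹ • ((∫ x in ω, g x) + ∫ x in ω, f x ∂ν)) ≤
        4 * ⨅ y : EuclideanSpace ℝ (Fin N), areaEInt ω g ν y :=
  stmt_5_general ω hpos g hg ν f hf
end

section
/- For a nonnegative measurable function (or more simply, for a function g : R^n -> [0,infinity) satisfying the subadditivity condition g(x + x') <= g(x) + g(x') for all x, x'), the supremum of g over the unit ball B_1 is bounded by a dimensional constant times the integral over B_1 of g(x)/|x|^n dx. -/
/-!
For `x` in the unit ball, subadditivity gives `g x ≤ g y + g (x - y)` for every `y`. Averaging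
over `y` in the ball `B` of radius `1/2` about `x/2`, which lies in the unit ball and is mapped
onto itself by the measure-preserving reflection `y ↦ x - y`, yields
`g x * |B| ≤ 2 ∫_B g ≤ 2 ∫_{B_1} g ≤ 2 ∫_{B_1} g(y) / |y|^n`, and `|B|` does not depend on `x`.
-/

open MeasureTheory Metric
open scoped NNReal ENNReal

theorem preimage_sub_left_ball {E : Type*} [SeminormedAddCommGroup E] (x c : E) (r : ℝ) :
    (x - ·) ⁻¹' ball c r = ball (x - c) r := by
  ext y
  simp only [Set.mem_preimage, mem_ball, dist_eq_norm]
  rw [← norm_neg]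
  congr! 2
  abel

theorem ENNReal.ofReal_le_ofReal_div_of_le_one (a : ℝ) {t : ℝ} (ht0 : 0 < t) (ht1 : t ≤ 1) :
    ENNReal.ofReal a ≤ ENNReal.ofReal (a / t) := by
  rcases le_total a 0 with ha | ha
  · simp [ENNReal.ofReal_of_nonpos ha]
  · exact ENNReal.ofReal_le_ofReal (le_div_self ha ht0 ht1)

theorem mul_measure_le_two_mul_setLIntegral_of_subadditive {G : Type*} [MeasurableSpace G]
    [AddCommGroup G] [MeasurableAdd G] [MeasurableNeg G] {μ : Measure G} [μ.IsAddLeftInvariant]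
    [μ.IsNegInvariant] {f : G → ℝ≥0∞} (hf : Measurable f) (hsub : ∀ a b, f (a + b) ≤ f a + f b)
    {x : G} {S : Set G} (hS : (x - ·) ⁻¹' S = S) :
    f x * μ S ≤ 2 * ∫⁻ y in S, f y ∂μ := by
  have hreflect : ∫⁻ y in S, f (x - y) ∂μ = ∫⁻ y in S, f y ∂μ := by
    conv_lhs => rw [← hS]
    exact (Measure.measurePreserving_sub_left μ x).setLIntegral_comp_preimage_emb
      (MeasurableEquiv.subLeft x).measurableEmbedding f S
  calc f x * μ S = ∫⁻ _ in S, f x ∂μ := by rw [setLIntegral_const]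
    _ ≤ ∫⁻ y in S, (f y + f (x - y)) ∂μ :=
        lintegral_mono fun y => by simpa only [add_sub_cancel] using hsub y (x - y)
    _ = 2 * ∫⁻ y in S, f y ∂μ := by rw [lintegral_add_left hf, hreflect, two_mul]

theorem le_div_measure_ball_mul_setLIntegral_of_subadditive {E : Type*} [NormedAddCommGroup E]
    [NormedSpace ℝ E] [FiniteDimensional ℝ E] [MeasurableSpace E] [BorelSpace E]
    (μ : Measure E) [μ.IsAddHaarMeasure] {f : E → ℝ≥0∞} (hf : Measurable f)
    (hsub : ∀ a b, f (a + b) ≤ f a + f b) {x : E} (hx : x ∈ ball (0 : E) 1) :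
    f x ≤ 2 / μ (ball 0 (1 / 2)) * ∫⁻ y in ball 0 1, f y ∂μ := by
  set c : E := (2 : ℝ)⁻¹ • x
  have hc : ‖c‖ < 1 / 2 := by
    rw [mem_ball_zero_iff] at hx
    rw [norm_smul]; norm_num; linarith
  have hsymm : (x - ·) ⁻¹' ball c (1 / 2) = ball c (1 / 2) := by
    rw [preimage_sub_left_ball]; congr 1; module
  have hsubset : ball c (1 / 2) ⊆ ball 0 1 :=
    ball_subset_ball' (by rw [dist_zero_right]; linarith)
  have hpos : μ (ball (0 : E) (1 / 2)) ≠ 0 := (measure_ball_pos μ 0 (by norm_num)).ne'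
  rw [← ENNReal.mul_div_right_comm,
    ENNReal.le_div_iff_mul_le (.inl hpos) (.inl measure_ball_lt_top.ne),
    ← Measure.addHaar_ball_center μ c]
  calc f x * μ (ball c (1 / 2)) ≤ 2 * ∫⁻ y in ball c (1 / 2), f y ∂μ :=
        mul_measure_le_two_mul_setLIntegral_of_subadditive hf hsub hsymm
    _ ≤ 2 * ∫⁻ y in ball 0 1, f y ∂μ := by gcongr

theorem setLIntegral_unitBall_le_div_norm_pow {E : Type*} [NormedAddCommGroup E]
    [MeasurableSpace E] [BorelSpace E] (μ : Measure E) [NullSingletonClass μ]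
    (g : E → ℝ) (k : ℕ) :
    ∫⁻ y in ball (0 : E) 1, ENNReal.ofReal (g y) ∂μ ≤
      ∫⁻ y in ball (0 : E) 1, ENNReal.ofReal (g y / ‖y‖ ^ k) ∂μ := by
  refine lintegral_mono_ae ((ae_restrict_iff' measurableSet_ball).2 ?_)
  filter_upwards [compl_mem_ae_iff.2 (measure_singleton (0 : E))] with y hy0 hy
  have hy0 : 0 < ‖y‖ := norm_pos_iff.2 hy0
  exact ENNReal.ofReal_le_ofReal_div_of_le_one _ (pow_pos hy0 k)
    (pow_le_one₀ hy0.le (mem_ball_zero_iff.1 hy).le)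

theorem stmt_7 (n : ℕ) (hn : 0 < n) :
    ∃ C : ℝ≥0, 0 < C ∧
      ∀ g : EuclideanSpace ℝ (Fin n) → ℝ, Measurable g → (∀ x, 0 ≤ g x) →
        (∀ x x', g (x + x') ≤ g x + g x') →
        ∀ x ∈ Metric.ball (0 : EuclideanSpace ℝ (Fin n)) 1,
          ENNReal.ofReal (g x) ≤
            (C : ℝ≥0∞) *
              ∫⁻ y in Metric.ball (0 : EuclideanSpace ℝ (Fin n)) 1,
                ENNReal.ofReal (g y / ‖y‖ ^ n) := by
  have : Nonempty (Fin n) := ⟨⟨0, hn⟩⟩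
  set v := volume (ball (0 : EuclideanSpace ℝ (Fin n)) (1 / 2))
  have hv0 : v ≠ 0 := (measure_ball_pos _ _ (by norm_num)).ne'
  have hvtop : v ≠ ∞ := measure_ball_lt_top.ne
  have hCtop : 2 / v ≠ ∞ := by simp [ENNReal.div_eq_top, hv0]
  refine ⟨(2 / v).toNNReal, ENNReal.toNNReal_pos (by simp [hvtop]) hCtop, ?_⟩
  intro g hg _ hsub x hx
  rw [ENNReal.coe_toNNReal hCtop]
  calc ENNReal.ofReal (g x)
      ≤ 2 / v * ∫⁻ y in ball 0 1, ENNReal.ofReal (g y) :=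
        le_div_measure_ball_mul_setLIntegral_of_subadditive volume hg.ennreal_ofReal
          (fun a b => (ENNReal.ofReal_le_ofReal (hsub a b)).trans ENNReal.ofReal_add_le) hx
    _ ≤ _ := by gcongr 2 / v * ?_; exact setLIntegral_unitBall_le_div_norm_pow volume g n
end

section
/- Let Phi, Psi : (0, R] -> [0, infinity) with Phi increasing, Psi decreasing, Psi(h/2) <= 4*Psi(h) for all h in (0, R], and suppose there is theta in (0,1) such that Phi(s) <= theta * Phi(t) + theta * Psi(t - s) whenever R/2 <= s < t <= R. Then Phi(R/2) <= C(theta) * Psi(R) for some constant C depending only on theta. -/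
/-! Iterate the hypothesis along the points `t i = R - R / 2 * τ ^ i`, whose gaps
`R / 2 * τ ^ i * (1 - τ)` shrink geometrically. Doubling gives `Ψ h ≤ 4 * (R / h) ^ 2 * Ψ R`,
so the `i`-th error term `θ ^ (i + 1) * Ψ (gap i)` is `O((θ / τ ^ 2) ^ i) * Ψ R`, which is summable
as soon as `θ < τ ^ 2 < 1`; the remainder `θ ^ n * Φ (t n) ≤ θ ^ n * Φ R` tends to `0`. -/

open Finset Filter

theorem le_pow_mul_add_sum_of_le_mul_succ_add {a b : ℕ → ℝ} {θ : ℝ} (hθ : 0 ≤ θ)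
    (h : ∀ i, a i ≤ θ * a (i + 1) + b i) (n : ℕ) :
    a 0 ≤ θ ^ n * a n + ∑ i ∈ range n, θ ^ i * b i := by
  induction n with
  | zero => simp
  | succ n ih =>
    have hstep := mul_le_mul_of_nonneg_left (h n) (pow_nonneg hθ n)
    rw [sum_range_succ, pow_succ]
    linarith

theorem le_of_le_mul_succ_add_of_sum_le {a b : ℕ → ℝ} {θ M B : ℝ} (hθ0 : 0 ≤ θ) (hθ1 : θ < 1)
    (h : ∀ i, a i ≤ θ * a (i + 1) + b i) (hM : ∀ n, a n ≤ M)
    (hB : ∀ n, ∑ i ∈ range n, θ ^ i * b i ≤ B) : a 0 ≤ B := by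
  have hle : ∀ n, a 0 ≤ θ ^ n * M + B := fun n => by
    have := mul_le_mul_of_nonneg_left (hM n) (pow_nonneg hθ0 n)
    linarith [le_pow_mul_add_sum_of_le_mul_succ_add hθ0 h n, hB n]
  have hlim : Tendsto (fun n : ℕ => θ ^ n * M + B) atTop (nhds (0 * M + B)) :=
    ((tendsto_pow_atTop_nhds_zero_of_lt_one hθ0 hθ1).mul_const M).add_const B
  simpa using ge_of_tendsto' hlim hle

theorem sum_range_le_div_of_le_mul_pow {f : ℕ → ℝ} {K r : ℝ} (hK : 0 ≤ K) (hr0 : 0 ≤ r)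
    (hr1 : r < 1) (hf : ∀ i, f i ≤ K * r ^ i) (n : ℕ) : ∑ i ∈ range n, f i ≤ K / (1 - r) := by
  have hgeom : ∑ i ∈ range n, r ^ i ≤ 1 / (1 - r) := by
    simpa using geom_sum_Ico_le_of_lt_one (m := 0) (n := n) hr0 hr1
  calc ∑ i ∈ range n, f i ≤ ∑ i ∈ range n, K * r ^ i := sum_le_sum fun i _ => hf i
    _ = K * ∑ i ∈ range n, r ^ i := (mul_sum ..).symm
    _ ≤ K * (1 / (1 - r)) := by gcongr
    _ = K / (1 - r) := mul_one_div K (1 - r)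

section Doubling

variable {Ψ : ℝ → ℝ} {R : ℝ}

theorem apply_div_two_pow_le_four_pow_mul (hR : 0 < R) (hdbl : ∀ h ∈ Set.Ioc 0 R, Ψ (h / 2) ≤ 4 * Ψ h)
    (q : ℕ) : Ψ (R / 2 ^ q) ≤ 4 ^ q * Ψ R := by
  induction q with
  | zero => simp
  | succ q ih =>
    have hmem : R / 2 ^ q ∈ Set.Ioc 0 R :=
      ⟨by positivity, div_le_self hR.le (one_le_pow₀ one_le_two)⟩
    calc Ψ (R / 2 ^ (q + 1)) = Ψ (R / 2 ^ q / 2) := by rw [pow_succ, div_div]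
      _ ≤ 4 * Ψ (R / 2 ^ q) := hdbl _ hmem
      _ ≤ 4 ^ (q + 1) * Ψ R := by rw [pow_succ]; linarith

theorem apply_le_four_mul_div_sq_mul (hR : 0 < R) (hΨ : AntitoneOn Ψ (Set.Ioc 0 R))
    (hΨR : 0 ≤ Ψ R) (hdbl : ∀ h ∈ Set.Ioc 0 R, Ψ (h / 2) ≤ 4 * Ψ h) {h : ℝ}
    (hh : h ∈ Set.Ioc 0 R) :
    Ψ h ≤ 4 * (R / h) ^ 2 * Ψ R := by
  obtain ⟨h0, hR'⟩ := hh
  obtain ⟨n, hn, hn'⟩ := exists_nat_pow_near ((one_le_div h0).2 hR') one_lt_two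
  have hlt : R / 2 ^ (n + 1) < h := by
    rw [div_lt_iff₀ (by positivity)]
    rwa [div_lt_iff₀ h0, mul_comm] at hn'
  calc Ψ h ≤ Ψ (R / 2 ^ (n + 1)) :=
        hΨ ⟨by positivity, div_le_self hR.le (one_le_pow₀ one_le_two)⟩ ⟨h0, hR'⟩ hlt.le
    _ ≤ 4 ^ (n + 1) * Ψ R := apply_div_two_pow_le_four_pow_mul hR hdbl (n + 1)
    _ = 4 * ((2 : ℝ) ^ n) ^ 2 * Ψ R := by rw [← pow_mul, pow_succ, mul_comm n, pow_mul]; ring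
    _ ≤ 4 * (R / h) ^ 2 * Ψ R := by gcongr

end Doubling

theorem apply_half_le_mul_of_le_mul_add {θ τ R : ℝ} {Φ Ψ : ℝ → ℝ} (hθ : 0 ≤ θ) (hτ0 : 0 < τ)
    (hτ1 : τ < 1) (hθτ : θ < τ ^ 2) (hR : 0 < R) (hΦ : MonotoneOn Φ (Set.Ioc 0 R))
    (hΨ : AntitoneOn Ψ (Set.Ioc 0 R)) (hΨR : 0 ≤ Ψ R)
    (hdbl : ∀ h ∈ Set.Ioc 0 R, Ψ (h / 2) ≤ 4 * Ψ h)
    (hiter : ∀ s t : ℝ, R / 2 ≤ s → s < t → t ≤ R → Φ s ≤ θ * Φ t + θ * Ψ (t - s)) :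
    Φ (R / 2) ≤ 16 * θ / ((1 - τ) ^ 2 * (1 - θ / τ ^ 2)) * Ψ R := by
  set t : ℕ → ℝ := fun i => R - R / 2 * τ ^ i with ht
  have hgap : ∀ i, t (i + 1) - t i = R / 2 * τ ^ i * (1 - τ) := fun i => by
    simp only [ht]; ring
  have hτpow : ∀ i, 0 < τ ^ i ∧ τ ^ i ≤ 1 := fun i =>
    ⟨pow_pos hτ0 i, pow_le_one₀ hτ0.le hτ1.le⟩
  have ht_mem : ∀ i, R / 2 ≤ t i ∧ t i < t (i + 1) ∧ t i ∈ Set.Ioc 0 R := fun i => by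
    have hpos : 0 < R / 2 * τ ^ i * (1 - τ) := by
      have := (hτpow i).1; have : 0 < 1 - τ := by linarith
      positivity
    have hlow : R / 2 ≤ t i := by simp only [ht]; nlinarith [hτpow i]
    have hhigh : t i ≤ R := by simp only [ht]; nlinarith [hτpow i]
    exact ⟨hlow, by linarith [hgap i], by linarith, hhigh⟩
  have hgap_mem : ∀ i, t (i + 1) - t i ∈ Set.Ioc 0 R := fun i => by
    have := ht_mem i; have := ht_mem (i + 1)
    simp only [Set.mem_Ioc] at *
    constructor <;> linarith
  have hr : θ / τ ^ 2 < 1 := (div_lt_one (by positivity)).2 hθτ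
  have hterm : ∀ i, θ ^ i * (θ * Ψ (t (i + 1) - t i))
      ≤ 16 * θ / (1 - τ) ^ 2 * Ψ R * (θ / τ ^ 2) ^ i := fun i => by
    have h1τ : 1 - τ ≠ 0 := by linarith
    calc θ ^ i * (θ * Ψ (t (i + 1) - t i))
        ≤ θ ^ i * (θ * (4 * (R / (t (i + 1) - t i)) ^ 2 * Ψ R)) := by
          gcongr; exact apply_le_four_mul_div_sq_mul hR hΨ hΨR hdbl (hgap_mem i)
      _ = 16 * θ / (1 - τ) ^ 2 * Ψ R * (θ / τ ^ 2) ^ i := by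
          rw [hgap, div_pow θ, ← pow_mul, mul_comm 2 i, pow_mul]; field_simp; ring
  have ht0 : t 0 = R / 2 := by simp only [ht]; ring
  rw [← ht0]
  refine le_of_le_mul_succ_add_of_sum_le (a := fun i => Φ (t i))
    (b := fun i => θ * Ψ (t (i + 1) - t i)) (M := Φ R) hθ (hθτ.trans_le ?_)
    (fun i => ?_) (fun n => ?_) (fun n => ?_)
  · exact pow_le_one₀ hτ0.le hτ1.le
  · exact hiter _ _ (ht_mem i).1 (ht_mem i).2.1 (ht_mem (i + 1)).2.2.2
  · exact hΦ (ht_mem n).2.2 ⟨hR, le_rfl⟩ (ht_mem n).2.2.2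
  · calc ∑ i ∈ range n, θ ^ i * (θ * Ψ (t (i + 1) - t i))
        ≤ 16 * θ / (1 - τ) ^ 2 * Ψ R / (1 - θ / τ ^ 2) :=
          sum_range_le_div_of_le_mul_pow (by positivity) (by positivity) hr hterm n
      _ = 16 * θ / ((1 - τ) ^ 2 * (1 - θ / τ ^ 2)) * Ψ R := by rw [← div_div]; ring

theorem stmt_8 (θ : ℝ) (hθ : θ ∈ Set.Ioo (0 : ℝ) 1) :
    ∃ C : ℝ, 0 < C ∧
      ∀ (R : ℝ), 0 < R →
        ∀ Φ Ψ : ℝ → ℝ,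
          (∀ h ∈ Set.Ioc (0 : ℝ) R, 0 ≤ Φ h) →
          (∀ h ∈ Set.Ioc (0 : ℝ) R, 0 ≤ Ψ h) →
          (∀ s ∈ Set.Ioc (0 : ℝ) R, ∀ t ∈ Set.Ioc (0 : ℝ) R, s ≤ t → Φ s ≤ Φ t) →
          (∀ s ∈ Set.Ioc (0 : ℝ) R, ∀ t ∈ Set.Ioc (0 : ℝ) R, s ≤ t → Ψ t ≤ Ψ s) →
          (∀ h ∈ Set.Ioc (0 : ℝ) R, Ψ (h / 2) ≤ 4 * Ψ h) →
          (∀ s t : ℝ, R / 2 ≤ s → s < t → t ≤ R → Φ s ≤ θ * Φ t + θ * Ψ (t - s)) →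
          Φ (R / 2) ≤ C * Ψ R := by
  obtain ⟨hθ0, hθ1⟩ := hθ
  set τ := (1 + θ) / 2 with hτ
  have hθτ : θ < τ ^ 2 := by nlinarith
  have hτ1 : τ < 1 := by linarith
  refine ⟨16 * θ / ((1 - τ) ^ 2 * (1 - θ / τ ^ 2)), ?_, ?_⟩
  · have : 0 < 1 - θ / τ ^ 2 := by rw [sub_pos, div_lt_one (by positivity)]; exact hθτ
    have : 0 < 1 - τ := by linarith
    positivity
  intro R hR Φ Ψ _ hΨ0 hΦ hΨ hdbl hiter
  exact apply_half_le_mul_of_le_mul_add hθ0.le (by positivity) hτ1 hθτ hR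
    (fun s hs t ht hst => hΦ s hs t ht hst) (fun s hs t ht hst => hΨ s hs t ht hst)
    (hΨ0 R ⟨hR, le_rfl⟩) hdbl hiter
end

section
/- Let f : R^N -> R be continuous and Lambda-convex for a cone Lambda in R^N, meaning f(t y + (1-t) y') <= t f(y) + (1-t) f(y') whenever y - y' is in Lambda and t is in [0,1], and assume f has linear growth |f(y)| <= L(1 + |y|). If Lambda spans R^N, then f is globally Lipschitz with Lipschitz constant bounded by a constant depending only on L and the cone Lambda. -/
/-!
Along a direction `v ∈ Λ` the restriction `u ↦ f (x + u • v)` is a convex function of one real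
variable with linear growth of rate `L ‖v‖`; a convex function on `ℝ` whose secant slopes exceeded
that rate would outgrow it, so `f` is `L ‖v‖`-Lipschitz along `v`. Since `Λ` spans, it contains a
basis, and walking from `y` to `x` along the basis directions bounds `|f x - f y|` by
`L ∑ ‖bᵢ‖ |cᵢ(x - y)|`, where the coordinate functionals `cᵢ` depend only on the basis.
-/

open scoped NNReal
open Filter Set

namespace ConvexOn

lemma sub_le_mul_sub_of_abs_le {g : ℝ → ℝ} (hg : ConvexOn ℝ univ g) {A B : ℝ}
    (hgrow : ∀ u, |g u| ≤ A + B * |u|) {t s : ℝ} (hts : t ≤ s) :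
    g s - g t ≤ B * (s - t) := by
  rcases hts.eq_or_lt with rfl | hts
  · simp
  by_contra! hslope
  set m := (g s - g t) / (s - t)
  have hmB : B < m := by rwa [lt_div_iff₀ (sub_pos.2 hts)]
  have hbound : ∀ R, s < R → 0 ≤ R → (m - B) * (R - s) ≤ 2 * A + B * |s| + B * s := by
    intro R hsR hR
    have hsec := hg.slope_mono_adjacent (mem_univ t) (mem_univ R) hts hsR
    rw [le_div_iff₀ (sub_pos.2 hsR)] at hsec
    have hgR := (abs_le.1 (hgrow R)).2
    have hgs := (abs_le.1 (hgrow s)).1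
    rw [abs_of_nonneg hR] at hgR
    linarith
  have htend : Tendsto (fun R => (m - B) * (R - s)) atTop atTop :=
    (tendsto_atTop_add_const_right _ (-s) tendsto_id).const_mul_atTop (sub_pos.2 hmB)
  obtain ⟨R, hR, hsR, h0R⟩ := ((htend.eventually_gt_atTop (2 * A + B * |s| + B * s)).and
    ((eventually_gt_atTop s).and (eventually_ge_atTop 0))).exists
  exact (hbound R hsR h0R).not_gt hR

lemma abs_sub_le_mul_abs_sub_of_abs_le {g : ℝ → ℝ} (hg : ConvexOn ℝ univ g) {A B : ℝ}
    (hgrow : ∀ u, |g u| ≤ A + B * |u|) (t s : ℝ) :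
    |g s - g t| ≤ B * |s - t| := by
  wlog hts : t ≤ s generalizing t s
  · rw [abs_sub_comm, abs_sub_comm s]
    exact this s t (le_of_not_ge hts)
  have hrefl : ConvexOn ℝ univ (fun u => g (-u)) := hg.comp_linearMap (-LinearMap.id)
  have hlow := hrefl.sub_le_mul_sub_of_abs_le (fun u => by simpa using hgrow (-u)) (neg_le_neg hts)
  simp only [neg_neg, sub_neg_eq_add, neg_add_eq_sub] at hlow
  rw [abs_of_nonneg (sub_nonneg.2 hts), abs_le]
  exact ⟨by linarith, hg.sub_le_mul_sub_of_abs_le hgrow hts⟩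

end ConvexOn

section ConvexAlong

variable {E : Type*}

def ConvexAlong [AddCommGroup E] [Module ℝ E] (Λ : Set E) (f : E → ℝ) : Prop :=
  ∀ y y' : E, y - y' ∈ Λ → ∀ t ∈ Icc (0 : ℝ) 1, f (t • y + (1 - t) • y') ≤ t * f y + (1 - t) * f y'

variable {Λ : Set E} {f : E → ℝ}

lemma ConvexAlong.convexOn_line [AddCommGroup E] [Module ℝ E]
    (hcone : ∀ c : ℝ, 0 < c → ∀ y ∈ Λ, c • y ∈ Λ) (hf : ConvexAlong Λ f) (x : E) {v : E}
    (hv : v ∈ Λ) : ConvexOn ℝ univ (fun u : ℝ => f (x + u • v)) := by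
  refine LinearOrder.convexOn_of_lt convex_univ fun p _ q _ hpq a b ha hb hab => ?_
  have hdir : (x + q • v) - (x + p • v) ∈ Λ := by
    rw [add_sub_add_left_eq_sub, ← sub_smul]
    exact hcone _ (sub_pos.2 hpq) v hv
  obtain rfl : a = 1 - b := by linarith
  have key := hf _ _ hdir b ⟨hb.le, by linarith⟩
  rw [show b • (x + q • v) + (1 - b) • (x + p • v) = x + ((1 - b) • p + b • q) • v by module]
    at key
  simp only [smul_eq_mul] at key ⊢
  linarith

lemma ConvexAlong.abs_add_smul_sub_le [NormedAddCommGroup E] [NormedSpace ℝ E]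
    (hcone : ∀ c : ℝ, 0 < c → ∀ y ∈ Λ, c • y ∈ Λ) (hf : ConvexAlong Λ f) {L : ℝ}
    (hgrow : ∀ y, |f y| ≤ L * √(1 + ‖y‖ ^ 2)) (x : E) {v : E} (hv : v ∈ Λ) (r : ℝ) :
    |f (x + r • v) - f x| ≤ L * ‖v‖ * |r| := by
  have hL : 0 ≤ L := by simpa using (abs_nonneg (f 0)).trans (hgrow 0)
  have hline (u : ℝ) : |f (x + u • v)| ≤ L * (1 + ‖x‖) + L * ‖v‖ * |u| := calc
    |f (x + u • v)| ≤ L * (1 + ‖x + u • v‖) :=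
      (hgrow _).trans (mul_le_mul_of_nonneg_left (sqrt_one_add_norm_sq_le _) hL)
    _ ≤ L * (1 + (‖x‖ + ‖v‖ * |u|)) := by
      gcongr
      exact (norm_add_le _ _).trans_eq (by rw [norm_smul, Real.norm_eq_abs, mul_comm])
    _ = L * (1 + ‖x‖) + L * ‖v‖ * |u| := by ring
  simpa using (hf.convexOn_line hcone x hv).abs_sub_le_mul_abs_sub_of_abs_le hline 0 r

end ConvexAlong

lemma abs_add_sum_smul_sub_le {ι E : Type*} [AddCommGroup E] [Module ℝ E] {f : E → ℝ}
    {v : ι → E} {C : ι → ℝ} (hf : ∀ i x (r : ℝ), |f (x + r • v i) - f x| ≤ C i * |r|)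
    (y : E) (c : ι → ℝ) (s : Finset ι) :
    |f (y + ∑ i ∈ s, c i • v i) - f y| ≤ ∑ i ∈ s, C i * |c i| := by
  classical
  induction s using Finset.induction_on with
  | empty => simp
  | insert j s hj ih =>
    rw [Finset.sum_insert hj, Finset.sum_insert hj, ← add_assoc, add_right_comm]
    set z := y + ∑ i ∈ s, c i • v i
    calc |f (z + c j • v j) - f y| ≤ |f (z + c j • v j) - f z| + |f z - f y| := abs_sub_le _ _ _
      _ ≤ C j * |c j| + ∑ i ∈ s, C i * |c i| := add_le_add (hf _ _ _) ih

lemma Module.Basis.lipschitzWith_of_abs_add_smul_sub_le {ι E : Type*} [Fintype ι]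
    [NormedAddCommGroup E] [NormedSpace ℝ E] [FiniteDimensional ℝ E] (b : Module.Basis ι ℝ E)
    {f : E → ℝ} {C : ι → ℝ≥0} (hf : ∀ i x (r : ℝ), |f (x + r • b i) - f x| ≤ C i * |r|) :
    LipschitzWith (∑ i, C i * ‖LinearMap.toContinuousLinearMap (b.coord i)‖₊) f := by
  refine LipschitzWith.of_dist_le_mul fun x y => ?_
  push_cast
  rw [Real.dist_eq, dist_eq_norm, Finset.sum_mul]
  calc |f x - f y| = |f (y + ∑ i, b.repr (x - y) i • b i) - f y| := by
        rw [b.sum_repr, add_sub_cancel]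
    _ ≤ ∑ i, C i * |b.repr (x - y) i| := abs_add_sum_smul_sub_le hf y _ _
    _ ≤ ∑ i, C i * (‖LinearMap.toContinuousLinearMap (b.coord i)‖ * ‖x - y‖) := by
        gcongr with i
        exact (LinearMap.toContinuousLinearMap (b.coord i)).le_opNorm (x - y)
    _ = ∑ i, C i * ‖LinearMap.toContinuousLinearMap (b.coord i)‖ * ‖x - y‖ := by
        simp only [mul_assoc]

theorem stmt_17_general {N : ℕ} (Λ : Set (EuclideanSpace ℝ (Fin N)))
    (hcone : ∀ c : ℝ, 0 < c → ∀ y ∈ Λ, c • y ∈ Λ)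
    (hspan : Submodule.span ℝ Λ = ⊤)
    (L : ℝ) :
    ∃ K : ℝ≥0, ∀ f : EuclideanSpace ℝ (Fin N) → ℝ, Continuous f →
      (∀ y, |f y| ≤ L * Real.sqrt (1 + ‖y‖ ^ 2)) →
      (∀ y y' : EuclideanSpace ℝ (Fin N), y - y' ∈ Λ → ∀ t ∈ Set.Icc (0 : ℝ) 1,
        f (t • y + (1 - t) • y') ≤ t * f y + (1 - t) * f y') →
      LipschitzWith K f := by
  let b := Module.Basis.ofSpan hspan.ge
  have hbΛ (i) : b i ∈ Λ := Module.Basis.ofSpan_subset hspan.ge (mem_range_self i)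
  have : Fintype _ := @Fintype.ofFinite _ (Module.Finite.finite_basis b)
  refine ⟨∑ i, L.toNNReal * ‖b i‖₊ * ‖LinearMap.toContinuousLinearMap (b.coord i)‖₊,
    fun f _ hgrow hconv => b.lipschitzWith_of_abs_add_smul_sub_le fun i x r => ?_⟩
  calc |f (x + r • b i) - f x| ≤ L * ‖b i‖ * |r| :=
        ConvexAlong.abs_add_smul_sub_le hcone hconv hgrow x (hbΛ i) r
    _ ≤ _ := by
        push_cast
        gcongr
        exact Real.le_coe_toNNReal L

theorem stmt_17 {N : ℕ} (Λ : Set (EuclideanSpace ℝ (Fin N)))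
    (hcone : ∀ c : ℝ, 0 < c → ∀ y ∈ Λ, c • y ∈ Λ)
    (hspan : Submodule.span ℝ Λ = ⊤)
    (L : ℝ) (hL : 0 < L) :
    ∃ K : ℝ≥0, ∀ f : EuclideanSpace ℝ (Fin N) → ℝ, Continuous f →
      (∀ y, |f y| ≤ L * Real.sqrt (1 + ‖y‖ ^ 2)) →
      (∀ y y' : EuclideanSpace ℝ (Fin N), y - y' ∈ Λ → ∀ t ∈ Set.Icc (0 : ℝ) 1,
        f (t • y + (1 - t) • y') ≤ t * f y + (1 - t) * f y') →
      LipschitzWith K f :=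
  stmt_17_general Λ hcone hspan L
end
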